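/- arXiv:1901.10683 — 4 statements merged into one kernel-verified Lean document; each statement's English description precedes it below -/
import Mathlib

section
/- A cubic (3-regular) graph cannot have exactly one Hamilton cycle: if a finite cubic graph contains a Hamilton cycle, then it contains at least three Hamilton cycles. -/
/-!
Thomason's lollipop argument. Fix an edge `uv` and consider the Hamilton paths starting with
`u, v`, as lists of vertices. If such a path ends at `w` and `x` is a neighbour of `w`, reversing
the segment after `x` (a Pósa rotation) gives another such path, unless `x` is the predecessor of
`w` or `x = u`. Joining paths related by a rotation yields the lollipop graph, in which the degree
of a path is the number of neighbours of `w` other than its predecessor and `u`. When all degrees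
of `G` are odd, this is odd exactly when `w` is adjacent to `u`, i.e. when the path closes up to a
Hamilton cycle through `uv`. By the handshake lemma these paths, hence the Hamilton cycles through
`uv`, are even in number. So a Hamilton cycle `H₀` has a second one `H₁` through one of its edges,
and a third one through an edge of `H₀` that `H₁` avoids.
-/

/-- `H` is a Hamilton cycle of `G`, viewed as a subgraph: a connected spanning
2-regular subgraph. -/
def IsHamiltonianCycleSubgraph {V : Type*} (G H : SimpleGraph V) : Prop :=
  H ≤ G ∧ H.Connected ∧ ∀ v : V, (H.neighborSet v).ncard = 2

/-- The number of Hamilton cycles of `G`, counted as subgraphs. -/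
noncomputable def hamCount {V : Type*} (G : SimpleGraph V) : ℕ :=
  Nat.card {H : SimpleGraph V // IsHamiltonianCycleSubgraph G H}

lemma List.eq_nil_or_singleton_or_append_pair {α : Type*} (l : List α) :
    l = [] ∨ (∃ z, l = [z]) ∨ ∃ r y z, l = r ++ [y, z] := by
  obtain rfl | ⟨l, z, rfl⟩ := l.eq_nil_or_concat'
  · exact .inl rfl
  obtain rfl | ⟨r, y, rfl⟩ := l.eq_nil_or_concat'
  · exact .inr (.inl ⟨z, rfl⟩)
  · exact .inr (.inr ⟨r, y, z, by simp⟩)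

lemma Set.odd_ncard_sdiff_pair_iff {α : Type*} {s : Set α} {a b : α} (hs : s.Finite)
    (hodd : Odd s.ncard) (hb : b ∈ s) (hab : a ≠ b) : Odd (s \ {a, b}).ncard ↔ a ∈ s := by
  by_cases ha : a ∈ s
  · have hsub : {a, b} ⊆ s := Set.insert_subset ha (Set.singleton_subset_iff.mpr hb)
    have h2 := Set.ncard_le_ncard hsub hs
    rw [Set.ncard_pair hab] at h2
    rw [Set.ncard_sdiff hsub (hs.subset hsub), Set.ncard_pair hab]
    exact iff_of_true (Nat.Odd.sub_even h2 hodd even_two) ha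
  · have : s \ {a, b} = s \ {b} := by
      ext x
      simp only [Set.mem_sdiff, Set.mem_insert_iff, Set.mem_singleton_iff]
      grind
    rw [this, Set.ncard_sdiff (Set.singleton_subset_iff.mpr hb), Set.ncard_singleton]
    exact iff_of_false (Nat.not_odd_iff_even.mpr (Nat.Odd.sub_odd hodd odd_one)) ha

lemma exists_ne_of_even_natCard {α : Type*} [Finite α] (h : Even (Nat.card α)) (a : α) :
    ∃ b, b ≠ a := by
  have : Nonempty α := ⟨a⟩
  have : Nontrivial α := Finite.one_lt_card_iff_nontrivial.mp (by
    obtain ⟨k, hk⟩ := h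
    have := Nat.card_pos (α := α)
    omega)
  exact exists_ne a

namespace SimpleGraph

variable {V : Type*} {G H K : SimpleGraph V} {u v : V}

lemma ncard_neighborSet_eq_degree [Fintype V] (G : SimpleGraph V) [DecidableRel G.Adj] (x : V) :
    (G.neighborSet x).ncard = G.degree x := by
  rw [← card_neighborSet_eq_degree, Set.ncard_eq_toFinset_card', Set.toFinset_card]

lemma ncard_neighborSet_lt_card [Fintype V] (G : SimpleGraph V) (x : V) :
    (G.neighborSet x).ncard < Fintype.card V := by
  classical
  exact G.ncard_neighborSet_eq_degree x ▸ G.degree_lt_card_verts x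

lemma eq_of_le_of_ncard_neighborSet_le [Finite V] (hle : H ≤ K)
    (hcard : ∀ x, (K.neighborSet x).ncard ≤ (H.neighborSet x).ncard) : H = K := by
  ext x y
  refine ⟨fun h ↦ hle h, fun h ↦ ?_⟩
  have : H.neighborSet x = K.neighborSet x :=
    Set.eq_of_subset_of_ncard_le (fun _ hz ↦ hle hz) (hcard x)
  exact (this ▸ h : y ∈ H.neighborSet x)

lemma neighborSet_eq_pair [Finite V] (h2 : (G.neighborSet u).ncard = 2) {a b : V}
    (ha : G.Adj u a) (hb : G.Adj u b) (hab : a ≠ b) : G.neighborSet u = {a, b} :=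
  (Set.eq_of_subset_of_ncard_le (by simp [Set.insert_subset_iff, ha, hb])
    (by rw [h2, Set.ncard_pair hab])).symm

lemma IsCycles.eq_of_isChain {a b : V} {s t : List V} (hK : K.IsCycles)
    (hs : (a :: b :: s).IsChain K.Adj) (hsn : (a :: b :: s).Nodup)
    (ht : (a :: b :: t).IsChain K.Adj) (htn : (a :: b :: t).Nodup)
    (hlen : s.length = t.length) : s = t := by
  induction s generalizing a b t with
  | nil => exact (List.length_eq_zero_iff.mp hlen.symm).symm
  | cons c s ih =>
    obtain _ | ⟨d, t⟩ := t
    · simp at hlen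
    have hcd : c = d := (hK.existsUnique_ne_adj hs.rel.symm).unique
      ⟨by grind, hs.of_cons.rel⟩ ⟨by grind, ht.of_cons.rel⟩
    subst hcd
    rw [ih hs.of_cons hsn.of_cons ht.of_cons htn.of_cons (by simpa using hlen)]

lemma _root_.List.IsChain.reachable {l : List V} (h : l.IsChain G.Adj) {x y : V} (hx : x ∈ l)
    (hy : y ∈ l) : G.Reachable x y := by
  obtain _ | ⟨a, l⟩ := l
  · simp at hx
  have key := h.induction (G.Reachable a) _ (fun _ _ hxy hx ↦ hx.trans hxy.reachable)
    (fun _ ↦ .refl a)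
  exact (key x hx).symm.trans (key y hy)

lemma Walk.toSubgraph_adj_iff_infix {a b : V} (p : G.Walk a b) {x y : V} :
    p.toSubgraph.Adj x y ↔ [x, y] <:+: p.support ∨ [y, x] <:+: p.support := by
  induction p with
  | nil =>
    simp only [Walk.toSubgraph, singletonSubgraph_adj, Pi.bot_apply, Walk.support_nil]
    exact ⟨fun h ↦ h.elim, fun h ↦ by rcases h with h | h <;> simpa using h.length_le⟩
  | @cons c d _ h q ih =>
    have hq : ∀ z, [z] <+: q.support ↔ z = d := fun z ↦ by
      rw [← q.cons_tail_support, List.cons_prefix_cons, and_iff_left List.nil_prefix]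
    simp only [Walk.toSubgraph, Subgraph.sup_adj, subgraphOfAdj_adj, Sym2.eq_iff, ih,
      Walk.support_cons, List.infix_cons_iff, List.cons_prefix_cons, hq]
    tauto

lemma Walk.toSubgraph_spanningCoe_eq {a b : V} (p : G.Walk a b) :
    p.toSubgraph.spanningCoe = fromRel fun x y ↦ [x, y] <:+: p.support := by
  ext x y
  rw [Subgraph.spanningCoe_adj, fromRel_adj, ← toSubgraph_adj_iff_infix]
  exact ⟨fun h ↦ ⟨h.ne, h⟩, And.right⟩

lemma Connected.exists_isCycle_snd_eq [Finite V] (hconn : H.Connected)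
    (hreg : ∀ x, (H.neighborSet x).ncard = 2) (huv : H.Adj u v) :
    ∃ p : H.Walk u u, p.IsCycle ∧ (∀ x, x ∈ p.support) ∧ p.snd = v := by
  obtain ⟨p, hp, hverts⟩ := IsCycles.exists_cycle_toSubgraph_verts_eq_connectedComponentSupp
    (c := H.connectedComponentMk u) (fun x _ ↦ hreg x) rfl ⟨v, huv⟩
  have hall : ∀ x, x ∈ p.support := fun x ↦ by
    rw [← Walk.mem_verts_toSubgraph, hverts]
    exact ConnectedComponent.eq.mpr (hconn.preconnected u x).symm
  have hv : v ∈ H.neighborSet u := huv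
  rw [neighborSet_eq_pair (hreg u) (p.adj_snd hp.not_nil) (p.adj_penultimate hp.not_nil).symm
    hp.snd_ne_penultimate] at hv
  rcases hv with hv | hv
  · exact ⟨p, hp, hall, hv.symm⟩
  · exact ⟨p.reverse, Walk.isCycle_reverse.mpr hp, by simpa using hall, by
      rw [Walk.snd_reverse, hv]⟩

/-- `l` lists the vertices of a Hamilton path of `G` whose first edge is `uv`
(`v` is not its endpoint). -/
structure IsHamPath (G : SimpleGraph V) (u v : V) (l : List V) : Prop where
  nodup : l.Nodup
  mem : ∀ x, x ∈ l
  isChain : l.IsChain G.Adj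
  isPrefix : [u, v] <+: l

namespace IsHamPath

variable {l : List V}

lemma exists_eq_cons_cons (hl : IsHamPath G u v l) : ∃ t, l = u :: v :: t := by
  obtain ⟨t, rfl⟩ := hl.isPrefix
  exact ⟨t, rfl⟩

lemma length_eq [Fintype V] (hl : IsHamPath G u v l) : l.length = Fintype.card V := by
  classical
  rw [← List.toFinset_card_of_nodup hl.nodup,
    Finset.eq_univ_of_forall fun x ↦ List.mem_toFinset.mpr (hl.mem x), Finset.card_univ]

end IsHamPath

instance [Fintype V] : Finite {l // IsHamPath G u v l} :=
  ((List.finite_length_eq V _).subset fun _ hl ↦ IsHamPath.length_eq hl).to_subtype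

def closingGraph (l : List V) (u : V) : SimpleGraph V :=
  fromRel fun x y ↦ [x, y] <:+: l ++ [u]

section closingGraph

variable {l : List V}

lemma closingGraph_le (hc : (l ++ [u]).IsChain G.Adj) : closingGraph l u ≤ G := by
  rintro x y ⟨-, h | h⟩
  · exact List.isChain_pair.mp (hc.infix h)
  · exact (List.isChain_pair.mp (hc.infix h)).symm

lemma isChain_closingGraph (hc : (l ++ [u]).IsChain G.Adj) :
    (l ++ [u]).IsChain (closingGraph l u).Adj :=
  (List.isChain_isInfix _).imp fun _ _ h ↦ ⟨(List.isChain_pair.mp (hc.infix h)).ne, .inl h⟩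

lemma IsHamPath.closingGraph_adj (hl : IsHamPath G u v l) (hc : (l ++ [u]).IsChain G.Adj) :
    (closingGraph l u).Adj u v := by
  obtain ⟨t, rfl⟩ := hl.exists_eq_cons_cons
  exact (isChain_closingGraph hc).rel

lemma IsHamPath.ncard_neighborSet_closingGraph (hl : IsHamPath G u v l)
    (hc : (l ++ [u]).IsChain G.Adj) (h3 : 3 ≤ l.length) (x : V) :
    ((closingGraph l u).neighborSet x).ncard = 2 := by
  obtain ⟨t, rfl⟩ := hl.exists_eq_cons_cons
  obtain ⟨W, hW, hlen⟩ : ∃ W : G.Walk u u, W.support = u :: v :: t ++ [u] ∧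
      W.length = t.length + 2 :=
    have hc' : (u :: (v :: t ++ [u])).IsChain G.Adj := hc
    ⟨(Walk.ofSupport _ (List.cons_ne_nil _ _) hc').copy List.head_cons
      ((List.getLast_cons (by simp)).trans (List.getLast_append_singleton _)),
      by rw [Walk.support_copy, Walk.support_ofSupport]; rfl,
      by rw [Walk.length_copy, Walk.length_ofSupport]; simp⟩
  have hcyc : W.IsCycle := by
    rw [Walk.isCycle_iff_isPath_tail_and_le_length, Walk.isPath_def,
      W.support_tail_of_not_nil (by simp [← Walk.length_eq_zero_iff, hlen]), hW, hlen]
    exact ⟨(List.perm_append_singleton u (v :: t)).nodup_iff.mpr hl.nodup, by simpa using h3⟩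
  have hW' : closingGraph (u :: v :: t) u = W.toSubgraph.spanningCoe := by
    rw [W.toSubgraph_spanningCoe_eq, hW]; rfl
  rw [hW']
  exact hcyc.ncard_neighborSet_toSubgraph_eq_two
    (by rw [hW]; exact List.mem_append_left _ (hl.mem x))

variable [Fintype V]

lemma IsHamPath.isHamiltonianCycleSubgraph_closingGraph (hl : IsHamPath G u v l)
    (hc : (l ++ [u]).IsChain G.Adj) (h3 : 3 ≤ Fintype.card V) :
    IsHamiltonianCycleSubgraph G (closingGraph l u) := by
  have : Nonempty V := ⟨u⟩
  refine ⟨closingGraph_le hc, ⟨fun x y ↦ ?_⟩,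
    hl.ncard_neighborSet_closingGraph hc (hl.length_eq ▸ h3)⟩
  exact (isChain_closingGraph hc).reachable (List.mem_append_left _ (hl.mem x))
    (List.mem_append_left _ (hl.mem y))

lemma IsHamPath.eq_of_closingGraph_eq {l' : List V} (hl : IsHamPath G u v l)
    (hl' : IsHamPath G u v l') (hc : (l ++ [u]).IsChain G.Adj)
    (hc' : (l' ++ [u]).IsChain G.Adj) (h3 : 3 ≤ Fintype.card V)
    (h : closingGraph l u = closingGraph l' u) : l = l' := by
  have hK : (closingGraph l u).IsCycles := fun x _ ↦
    hl.ncard_neighborSet_closingGraph hc (hl.length_eq ▸ h3) x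
  have hch := (isChain_closingGraph hc).left_of_append
  have hch' := (isChain_closingGraph hc').left_of_append
  rw [← h] at hch'
  have hlen := hl.length_eq.trans hl'.length_eq.symm
  obtain ⟨t, rfl⟩ := hl.exists_eq_cons_cons
  obtain ⟨t', rfl⟩ := hl'.exists_eq_cons_cons
  rw [hK.eq_of_isChain hch hl.nodup hch' hl'.nodup (by simpa using hlen)]

lemma _root_.IsHamiltonianCycleSubgraph.exists_closingGraph_eq
    (hH : IsHamiltonianCycleSubgraph G H) (huv : H.Adj u v) :
    ∃ l, IsHamPath G u v l ∧ (l ++ [u]).IsChain G.Adj ∧ closingGraph l u = H := by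
  classical
  obtain ⟨hle, hconn, hreg⟩ := hH
  obtain ⟨p, hp, hall, rfl⟩ := hconn.exists_isCycle_snd_eq hreg huv
  obtain ⟨s, hs⟩ : ∃ s, p.support = u :: p.snd :: s ++ [u] := by
    cases p with
    | nil => exact absurd .nil hp.not_nil
    | cons h q =>
      have hq : ¬q.Nil := fun hq ↦ h.ne hq.eq.symm
      refine ⟨q.tail.support.dropLast, ?_⟩
      rw [Walk.support_cons, ← Walk.cons_support_tail hq, ← Walk.dropLast_support_concat q.tail]
      simp
  have hc : (u :: p.snd :: s ++ [u]).IsChain G.Adj := hs ▸ p.isChain_adj_support.imp hle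
  refine ⟨u :: p.snd :: s, ⟨?_, fun x ↦ ?_, hc.left_of_append, ⟨s, rfl⟩⟩, hc, ?_⟩
  · have := hp.support_nodup
    rw [hs] at this
    exact (List.perm_append_singleton u (p.snd :: s)).nodup_iff.mp this
  · have := hall x
    rw [hs] at this
    simp only [List.cons_append, List.mem_cons, List.mem_append] at this ⊢
    tauto
  · ext x y
    rw [closingGraph, ← hs, ← p.toSubgraph_spanningCoe_eq, Subgraph.spanningCoe_adj]
    exact hp.adj_toSubgraph_iff_of_isCycles (fun x _ ↦ hreg x) (by simp [hall x]) y

theorem natCard_isHamPath_closing_eq (h3 : 3 ≤ Fintype.card V) :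
    Nat.card {l // IsHamPath G u v l ∧ (l ++ [u]).IsChain G.Adj} =
      Nat.card {H // IsHamiltonianCycleSubgraph G H ∧ H.Adj u v} := by
  refine Nat.card_congr (.ofBijective (fun l ↦ ⟨closingGraph l.1 u,
    l.2.1.isHamiltonianCycleSubgraph_closingGraph l.2.2 h3, l.2.1.closingGraph_adj l.2.2⟩) ⟨?_, ?_⟩)
  · rintro ⟨l, hl, hc⟩ ⟨l', hl', hc'⟩ h
    exact Subtype.ext (hl.eq_of_closingGraph_eq hl' hc hc' h3 (congrArg Subtype.val h))
  · rintro ⟨H, hH, huv⟩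
    obtain ⟨l, hl, hc, rfl⟩ := hH.exists_closingGraph_eq huv
    exact ⟨⟨l, hl, hc⟩, rfl⟩

end closingGraph

section lollipop

lemma IsHamPath.isHamPath_append_cons_reverse_iff {a r : List V} {x p w : V}
    (hl : IsHamPath G u v (a ++ x :: (r ++ [p, w]))) :
    IsHamPath G u v (a ++ x :: (r ++ [p, w]).reverse) ↔ G.Adj x w ∧ x ≠ u := by
  have hperm : (a ++ x :: (r ++ [p, w]).reverse).Perm (a ++ x :: (r ++ [p, w])) :=
    .append_left a (.cons x (List.reverse_perm _))
  have hnd := hl.nodup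
  obtain ⟨t, ht⟩ := hl.exists_eq_cons_cons
  have hrev : (r ++ [p, w]).reverse = w :: p :: r.reverse := by simp
  rw [hrev] at hperm ⊢
  constructor
  · intro hl'
    refine ⟨(List.isChain_split.mp hl'.isChain).2.rel, ?_⟩
    rintro rfl
    obtain ⟨t', ht'⟩ := hl'.exists_eq_cons_cons
    -- a pivot at `u` makes the rotated path start `u, w`, but `w ≠ v`
    rcases a with _ | ⟨a0, a⟩
    · simp only [List.nil_append, List.cons.injEq, true_and] at ht ht'
      rw [ht'.1] at ht hnd
      rcases r with _ | ⟨r0, r⟩ <;>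
        simp only [List.nil_append, List.cons_append, List.cons.injEq] at ht <;>
        simp [ht.1] at hnd
    · simp only [List.cons_append, List.cons.injEq] at ht hnd
      simp [ht.1] at hnd
  · rintro ⟨hxw, hxu⟩
    refine ⟨hperm.nodup_iff.mpr hl.nodup, fun y ↦ hperm.mem_iff.mpr (hl.mem y), ?_, ?_⟩
    · have hch := List.isChain_split.mp hl.isChain
      refine List.isChain_split.mpr ⟨hch.1, List.isChain_cons_cons.mpr ⟨hxw, ?_⟩⟩
      rw [← hrev, List.isChain_reverse]
      exact hch.2.of_cons.imp fun _ _ h ↦ h.symm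
    · rcases a with _ | ⟨a0, _ | ⟨a1, a⟩⟩ <;> simp_all

variable [DecidableEq V] {l : List V} {x : V}

def posaRotate (l : List V) (x : V) : List V :=
  l.take (l.idxOf x + 1) ++ (l.drop (l.idxOf x + 1)).reverse

lemma posaRotate_append_cons {a b : List V} (hx : x ∉ a) :
    posaRotate (a ++ x :: b) x = a ++ x :: b.reverse := by
  simp [posaRotate, List.idxOf_append_of_notMem hx, List.take_append]

lemma posaRotate_posaRotate (hl : l.Nodup) (hx : x ∈ l) :
    posaRotate (posaRotate l x) x = l := by
  obtain ⟨a, b, rfl⟩ := List.append_of_mem hx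
  have hxa : x ∉ a := fun h ↦ List.disjoint_of_nodup_append hl h List.mem_cons_self
  rw [posaRotate_append_cons hxa, posaRotate_append_cons hxa, List.reverse_reverse]

lemma IsHamPath.posaRotate_iff {c : List V} {p w : V} (hl : IsHamPath G u v (c ++ [p, w])) :
    IsHamPath G u v (posaRotate (c ++ [p, w]) x) ∧ posaRotate (c ++ [p, w]) x ≠ c ++ [p, w] ↔
      x ∈ G.neighborSet w \ {u, p} := by
  obtain ⟨a, b, hab⟩ := List.append_of_mem (hl.mem x)
  have hnd := hl.nodup
  rw [hab] at hnd ⊢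
  have hxa : x ∉ a := fun h ↦ List.disjoint_of_nodup_append hnd h List.mem_cons_self
  have hxb : x ∉ b := (List.nodup_cons.mp (List.nodup_append.mp hnd).2.1).1
  rw [posaRotate_append_cons hxa]
  obtain rfl | ⟨z, rfl⟩ | ⟨r, y, z, rfl⟩ := b.eq_nil_or_singleton_or_append_pair
  · have hw : w = x := by simpa using congrArg List.getLast? hab
    simp [hw]
  · obtain ⟨hp, -⟩ : p = x ∧ w = z := by simpa using (List.append_inj' hab rfl).2
    simp [hp]
  · have h2 : c ++ [p, w] = (a ++ x :: r) ++ [y, z] := by rw [hab]; simp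
    have h := (List.append_inj' h2 rfl).2
    simp only [List.cons.injEq, and_true] at h
    obtain ⟨rfl, rfl⟩ := h
    have hl' : IsHamPath G u v (a ++ x :: (r ++ [p, w])) := hab ▸ hl
    have hne : a ++ x :: (r ++ [p, w]).reverse ≠ a ++ x :: (r ++ [p, w]) := by
      rcases r with _ | ⟨r0, r⟩ <;> simp at hnd ⊢ <;> grind
    rw [and_iff_left hne, hl'.isHamPath_append_cons_reverse_iff]
    have hxp : x ≠ p := fun h ↦ hxb (by simp [h])
    simp only [Set.mem_sdiff, mem_neighborSet, Set.mem_insert_iff, Set.mem_singleton_iff,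
      G.adj_comm w]
    tauto

lemma posaRotate_injOn {c : List V} {w : V} (hl : (c ++ [w]).Nodup) :
    Set.InjOn (posaRotate (c ++ [w])) {x | x ∈ c} := by
  have key : ∀ x ∈ c, ∃ a R, posaRotate (c ++ [w]) x = (a ++ [x]) ++ w :: R ∧
      w ∉ a ++ [x] ∧ w ∉ R := by
    intro x hx
    obtain ⟨a, b, rfl⟩ := List.append_of_mem hx
    have hnd : (a ++ x :: (b ++ [w])).Nodup := by simpa using hl
    have hxa : x ∉ a := fun h ↦ List.disjoint_of_nodup_append hnd h List.mem_cons_self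
    refine ⟨a, b.reverse, ?_, ?_⟩
    · rw [List.append_assoc, List.cons_append, posaRotate_append_cons hxa]
      simp
    · simp at hnd ⊢
      grind
  rintro x hx x' hx' h
  obtain ⟨a, R, h1, hw, hwR⟩ := key x hx
  obtain ⟨a', R', h1', hw', -⟩ := key x' hx'
  rw [h1, h1'] at h
  simpa using congrArg List.getLast? ((List.append_cons_inj_of_notMem hw hwR).mp h).1

def lollipop (G : SimpleGraph V) (u v : V) : SimpleGraph {l : List V // IsHamPath G u v l} where
  Adj l l' := l ≠ l' ∧ ∃ x, l'.1 = posaRotate l.1 x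
  symm := ⟨fun l _ ⟨hne, x, h⟩ ↦
    ⟨hne.symm, x, by rw [h, posaRotate_posaRotate l.2.nodup (l.2.mem x)]⟩⟩
  loopless := ⟨fun _ h ↦ h.1 rfl⟩

lemma lollipop_adj {l l' : {l : List V // IsHamPath G u v l}} :
    (lollipop G u v).Adj l l' ↔ l ≠ l' ∧ ∃ x, l'.1 = posaRotate l.1 x :=
  Iff.rfl

lemma IsHamPath.ncard_neighborSet_lollipop {c : List V} {p w : V}
    (hl : IsHamPath G u v (c ++ [p, w])) :
    ((lollipop G u v).neighborSet ⟨_, hl⟩).ncard = (G.neighborSet w \ {u, p}).ncard := by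
  have himage : Subtype.val '' (lollipop G u v).neighborSet ⟨_, hl⟩ =
      posaRotate (c ++ [p, w]) '' (G.neighborSet w \ {u, p}) := by
    ext l
    constructor
    · rintro ⟨l, hadj, rfl⟩
      obtain ⟨hne, x, hx⟩ := lollipop_adj.mp hadj
      exact ⟨x, hl.posaRotate_iff.mp ⟨hx ▸ l.2, fun h ↦ hne (Subtype.ext (hx.trans h).symm)⟩,
        hx.symm⟩
    · rintro ⟨x, hx, rfl⟩
      obtain ⟨hl', hne⟩ := hl.posaRotate_iff.mpr hx
      exact ⟨⟨_, hl'⟩, lollipop_adj.mpr ⟨fun h ↦ hne (congrArg Subtype.val h).symm, x, rfl⟩, rfl⟩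
  have hinj : Set.InjOn (posaRotate (c ++ [p, w])) (G.neighborSet w \ {u, p}) := by
    have := posaRotate_injOn (c := c ++ [p]) (w := w) (by simpa using hl.nodup)
    simp only [List.append_assoc, List.cons_append, List.nil_append] at this
    refine this.mono fun x hx ↦ ?_
    have := hl.mem x
    simp only [Set.mem_sdiff, mem_neighborSet] at hx
    simp only [List.mem_append, List.mem_cons] at this ⊢
    grind [hx.1.ne]
  rw [← Set.ncard_image_of_injective _ Subtype.val_injective, himage,
    hinj.ncard_image]

variable [Fintype V]

lemma IsHamPath.odd_ncard_neighborSet_lollipop_iff (hl : IsHamPath G u v l)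
    (h3 : 3 ≤ Fintype.card V) (hodd : ∀ x, Odd (G.neighborSet x).ncard) :
    Odd ((lollipop G u v).neighborSet ⟨l, hl⟩).ncard ↔ (l ++ [u]).IsChain G.Adj := by
  have hlen := hl.length_eq
  obtain rfl | ⟨z, rfl⟩ | ⟨c, p, w, rfl⟩ := l.eq_nil_or_singleton_or_append_pair
  iterate 2 simp at hlen; omega
  have hpw : p ∈ G.neighborSet w := (List.isChain_append.mp hl.isChain).2.1.rel.symm
  have hup : u ≠ p := by
    rintro rfl
    obtain ⟨t, ht⟩ := hl.exists_eq_cons_cons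
    have hnd := hl.nodup
    rcases c with _ | ⟨c0, c⟩
    · simp at hlen; omega
    · simp only [List.cons_append, List.cons.injEq] at ht hnd
      simp [ht.1] at hnd
  rw [hl.ncard_neighborSet_lollipop,
    Set.odd_ncard_sdiff_pair_iff (Set.toFinite _) (hodd w) hpw hup, List.isChain_append]
  simp [hl.isChain]

theorem even_natCard_isHamPath_closing (h3 : 3 ≤ Fintype.card V)
    (hodd : ∀ x, Odd (G.neighborSet x).ncard) :
    Even (Nat.card {l // IsHamPath G u v l ∧ (l ++ [u]).IsChain G.Adj}) := by
  classical
  have : Fintype {l // IsHamPath G u v l} := .ofFinite _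
  have key := (lollipop G u v).even_card_odd_degree_vertices
  rw [Finset.filter_congr fun l _ ↦ by
    rw [← ncard_neighborSet_eq_degree, l.2.odd_ncard_neighborSet_lollipop_iff h3 hodd]] at key
  rwa [Nat.card_congr (Equiv.subtypeSubtypeEquivSubtypeInter _ _).symm, Nat.card_eq_fintype_card,
    Fintype.card_subtype]

end lollipop

theorem even_natCard_isHamiltonianCycleSubgraph_adj [Fintype V] (h3 : 3 ≤ Fintype.card V)
    (hodd : ∀ x, Odd (G.neighborSet x).ncard) (u v : V) :
    Even (Nat.card {H // IsHamiltonianCycleSubgraph G H ∧ H.Adj u v}) := by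
  classical
  rw [← natCard_isHamPath_closing_eq h3]
  exact even_natCard_isHamPath_closing h3 hodd

end SimpleGraph

section

open SimpleGraph

variable {V : Type*} [Fintype V] {G H H' : SimpleGraph V}

lemma IsHamiltonianCycleSubgraph.exists_ne_of_adj (hH : IsHamiltonianCycleSubgraph G H)
    (h3 : 3 ≤ Fintype.card V) (hodd : ∀ x, Odd (G.neighborSet x).ncard) {a b : V}
    (hab : H.Adj a b) : ∃ H', IsHamiltonianCycleSubgraph G H' ∧ H'.Adj a b ∧ H' ≠ H := by
  obtain ⟨⟨H', hH', hab'⟩, hne⟩ := exists_ne_of_even_natCard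
    (even_natCard_isHamiltonianCycleSubgraph_adj h3 hodd a b) ⟨H, hH, hab⟩
  exact ⟨H', hH', hab', fun h ↦ hne (Subtype.ext h)⟩

lemma IsHamiltonianCycleSubgraph.exists_adj_not_adj (hH : IsHamiltonianCycleSubgraph G H)
    (hH' : IsHamiltonianCycleSubgraph G H') (hne : H ≠ H') : ∃ a b, H.Adj a b ∧ ¬H'.Adj a b := by
  by_contra! h
  exact hne (eq_of_le_of_ncard_neighborSet_le (fun a b ↦ h a b) fun x ↦ by rw [hH.2.2, hH'.2.2])

end

/-- Smith's theorem: a finite cubic graph with a Hamilton cycle has at least three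
Hamilton cycles. -/
theorem smith_at_least_three_hamilton_cycles {V : Type*} [Fintype V] (G : SimpleGraph V)
    (hcubic : ∀ v : V, (G.neighborSet v).ncard = 3)
    (hham : ∃ H : SimpleGraph V, IsHamiltonianCycleSubgraph G H) :
    3 ≤ hamCount G := by
  obtain ⟨H₀, hH₀⟩ := hham
  obtain ⟨u⟩ : Nonempty V := hH₀.2.1.nonempty
  have h3 : 3 ≤ Fintype.card V := (hcubic u ▸ G.ncard_neighborSet_lt_card u).le
  have hodd : ∀ x, Odd (G.neighborSet x).ncard := fun x ↦ by rw [hcubic]; decide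
  obtain ⟨v, huv⟩ : (H₀.neighborSet u).Nonempty :=
    Set.nonempty_of_ncard_ne_zero (by rw [hH₀.2.2 u]; norm_num)
  obtain ⟨H₁, hH₁, -, hne₁⟩ := hH₀.exists_ne_of_adj h3 hodd huv
  obtain ⟨a, b, hab₀, hab₁⟩ := hH₀.exists_adj_not_adj hH₁ hne₁.symm
  obtain ⟨H₂, hH₂, hab₂, hne₂⟩ := hH₀.exists_ne_of_adj h3 hodd hab₀
  change 3 ≤ Nat.card {H | IsHamiltonianCycleSubgraph G H}
  rw [Nat.card_coe_set_eq]
  exact (Set.two_lt_ncard (Set.toFinite _)).mpr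
    ⟨H₀, hH₀, H₁, hH₁, H₂, hH₂, hne₁.symm, hne₂.symm, fun h ↦ hab₁ (h ▸ hab₂)⟩
end

section
/- In the k-rung ladder, the number of spanning subgraphs consisting of two vertex-disjoint paths, one with endpoints u_1 and v_1 and the other with endpoints u_k and v_k, which together cover all 2k vertices, equals k-1; each such pair of paths uses exactly two consecutive rungs u_j v_j and u_{j+1} v_{j+1}. -/
/-!
A path in the ladder from `u_a` to `v_a` that never enters a column left of `a` is forced to be
a hook: its first step can only go to `u_{a+1}` (or straight across the rung), its last step
can only come from `v_{a+1}`, and what lies in between is again such a path one column further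
right. So the path starting at `u_1` is the hook over columns `1, …, j`, closed by rung `j`, and
by the left-right symmetry of the ladder the path starting at `u_k` is the mirror hook over
columns `i, …, k`, closed by rung `i`. Disjointness and covering force `i = j + 1`, so the
decompositions are indexed by `j ∈ {1, …, k - 1}`.
-/

/-- The `k`-rung ladder `P_k □ K₂`.  The vertex `(j, false)` is `u_{j+1}` and `(j, true)`
is `v_{j+1}`: rail edges join consecutive vertices on the same rail, and rung edges join
`u_i` to `v_i`. -/
def Ladder (k : ℕ) : SimpleGraph (Fin k × Bool) :=
  SimpleGraph.fromRel (fun p q =>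
    (p.2 = q.2 ∧ (p.1 : ℕ) + 1 = (q.1 : ℕ)) ∨
    (p.1 = q.1 ∧ p.2 = false ∧ q.2 = true))

/-- `H` is a spanning subgraph of the `k`-rung ladder consisting of two vertex-disjoint
paths, one with endpoints `u_1, v_1` and the other with endpoints `u_k, v_k`, which
together cover all vertices. -/
def IsTwoPathDecomposition (k : ℕ) (hk : 0 < k) (H : SimpleGraph (Fin k × Bool)) : Prop :=
  H ≤ Ladder k ∧
  ∃ (p : H.Walk (⟨0, hk⟩, false) (⟨0, hk⟩, true))
    (q : H.Walk (⟨k - 1, Nat.sub_lt hk one_pos⟩, false)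
                (⟨k - 1, Nat.sub_lt hk one_pos⟩, true)),
      p.IsPath ∧ q.IsPath ∧
      (∀ x : Fin k × Bool, x ∈ p.support ↔ x ∉ q.support) ∧
      H.edgeSet = {e | e ∈ p.edges} ∪ {e | e ∈ q.edges}

open SimpleGraph

namespace Ladder

variable {k : ℕ}

theorem adj_iff {x y : Fin k × Bool} :
    (Ladder k).Adj x y ↔
      (x.2 = y.2 ∧ ((x.1 : ℕ) + 1 = y.1 ∨ (y.1 : ℕ) + 1 = x.1)) ∨
        (x.1 = y.1 ∧ x.2 ≠ y.2) := by
  obtain ⟨⟨i, hi⟩, b⟩ := x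
  obtain ⟨⟨j, hj⟩, c⟩ := y
  cases b <;> cases c <;> simp [Ladder, fromRel_adj] <;> omega

theorem adj_rung (i : Fin k) : (Ladder k).Adj (i, false) (i, true) := by
  simp [adj_iff]

theorem adj_succ (a : ℕ) (ha : a + 1 < k) (b : Bool) :
    (Ladder k).Adj (⟨a, by omega⟩, b) (⟨a + 1, ha⟩, b) := by
  simp [adj_iff]

theorem eq_rung_or_succ_of_adj {a : ℕ} {ha : a < k} {b : Bool} {x : Fin k × Bool}
    (hadj : (Ladder k).Adj (⟨a, ha⟩, b) x) (hx : a ≤ (x.1 : ℕ)) :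
    x = (⟨a, ha⟩, !b) ∨ ∃ h : a + 1 < k, x = (⟨a + 1, h⟩, b) := by
  obtain ⟨⟨i, hi⟩, c⟩ := x
  cases b <;> cases c <;> simp_all [adj_iff] <;> omega

def reflect : Ladder k ≃g Ladder k where
  toEquiv := Equiv.prodCongr Fin.revPerm (Equiv.refl Bool)
  map_rel_iff' {x y} := by
    obtain ⟨⟨i, hi⟩, b⟩ := x
    obtain ⟨⟨j, hj⟩, c⟩ := y
    cases b <;> cases c <;> simp [adj_iff, Fin.ext_iff] <;> omega

theorem reflect_apply (x : Fin k × Bool) : reflect x = (x.1.rev, x.2) := rfl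

theorem reflect_involutive : Function.Involutive (reflect (k := k)) := fun x => by
  simp [reflect_apply]

/-- The rung column `r` is a separate parameter because a hook has its rung at its right end,
`r = hi`, while its mirror image has it at its left end, `r = lo`. -/
def hookGraph (k lo hi r : ℕ) : SimpleGraph (Fin k × Bool) where
  Adj x y := (Ladder k).Adj x y ∧ (lo ≤ (x.1 : ℕ) ∧ (x.1 : ℕ) ≤ hi) ∧
    (lo ≤ (y.1 : ℕ) ∧ (y.1 : ℕ) ≤ hi) ∧ (x.1 = y.1 → (x.1 : ℕ) = r)
  symm := ⟨fun _ _ h => ⟨h.1.symm, h.2.2.1, h.2.1, fun e => e ▸ h.2.2.2 e.symm⟩⟩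
  loopless := ⟨fun _ h => h.1.ne rfl⟩

def hook : (a n : ℕ) → (h : a + n < k) →
    (Ladder k).Walk (⟨a, by omega⟩, false) (⟨a, by omega⟩, true)
  | a, 0, h => .cons (adj_rung ⟨a, by omega⟩) .nil
  | a, n + 1, h => .cons (adj_succ a (by omega) false)
      ((hook (a + 1) n (by omega)).concat (adj_succ a (by omega) true).symm)

theorem mem_support_hook (a n : ℕ) (h : a + n < k) (x : Fin k × Bool) :
    x ∈ (hook a n h).support ↔ a ≤ (x.1 : ℕ) ∧ (x.1 : ℕ) ≤ a + n := by
  obtain ⟨⟨i, hi⟩, b⟩ := x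
  induction n generalizing a with
  | zero => cases b <;> simp [hook] <;> omega
  | succ n ih =>
    cases b <;> simp [hook, Walk.support_concat, ih] <;> omega

theorem isPath_hook (a n : ℕ) (h : a + n < k) : (hook a n h).IsPath := by
  induction n generalizing a with
  | zero => simp [hook]
  | succ n ih =>
    rw [hook, Walk.cons_isPath_iff, Walk.concat_isPath_iff]
    simp [ih, mem_support_hook, Walk.support_concat]

theorem mem_edges_hook (a n : ℕ) (h : a + n < k) (e : Sym2 (Fin k × Bool)) :
    e ∈ (hook a n h).edges ↔ e ∈ (hookGraph k a (a + n) (a + n)).edgeSet := by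
  induction e using Sym2.ind with | _ x y => ?_
  obtain ⟨⟨i, hi⟩, b⟩ := x
  obtain ⟨⟨j, hj⟩, c⟩ := y
  induction n generalizing a with
  | zero => cases b <;> cases c <;> simp [hook, hookGraph, adj_iff] <;> grind
  | succ n ih =>
    cases b <;> cases c <;> simp [hook, hookGraph, adj_iff, Walk.edges_concat, ih] <;> grind

theorem eq_hook_of_isPath {a : ℕ} {ha : a < k}
    (W : (Ladder k).Walk (⟨a, ha⟩, false) (⟨a, ha⟩, true)) (hW : W.IsPath)
    (hcol : ∀ x ∈ W.support, a ≤ (x.1 : ℕ)) : ∃ n h, W = hook a n h := by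
  cases W with
  | cons hadj W' =>
    rw [Walk.cons_isPath_iff] at hW
    obtain ⟨hW', hstart⟩ := hW
    rcases eq_rung_or_succ_of_adj hadj (hcol _ (by simp)) with rfl | ⟨h1, rfl⟩
    · obtain rfl := (Walk.isPath_iff_nil.mp hW').eq_nil
      exact ⟨0, ha, rfl⟩
    obtain ⟨_, h', W'', rfl⟩ := Walk.exists_eq_cons_of_ne (by simp) W'
    obtain ⟨c, M, h2, hW''⟩ := Walk.exists_cons_eq_concat h' W''
    rw [hW''] at hW' hstart hcol ⊢
    obtain ⟨hM, hend⟩ := (Walk.concat_isPath_iff h2).mp hW'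
    obtain rfl | ⟨_, rfl⟩ := eq_rung_or_succ_of_adj h2.symm (hcol c (by simp))
    · exact absurd (M.support_subset_support_concat h2 M.end_mem_support) hstart
    have hMcol : ∀ x ∈ M.support, a + 1 ≤ (x.1 : ℕ) := fun x hx => by
      have hxa := hcol x (by simp [Walk.support_concat, hx])
      have hxF : x ≠ (⟨a, ha⟩, false) := fun h =>
        hstart (h ▸ M.support_subset_support_concat h2 hx)
      have hxT : x ≠ (⟨a, ha⟩, true) := fun h => hend (h ▸ hx)
      obtain ⟨⟨i, hi⟩, b⟩ := x
      revert hxa hxF hxT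
      cases b <;> simp <;> omega
    obtain ⟨n, hn, rfl⟩ := eq_hook_of_isPath M hM hMcol
    exact ⟨n + 1, by omega, rfl⟩
termination_by k - a

theorem hookGraph_adj_reflect {lo hi r : ℕ} (hlo : lo < k) (hhi : hi < k) (hr : r < k)
    {x y : Fin k × Bool} :
    (hookGraph k (k - 1 - hi) (k - 1 - lo) (k - 1 - r)).Adj (reflect x) (reflect y) ↔
      (hookGraph k lo hi r).Adj x y := by
  simp only [hookGraph]
  rw [reflect.map_adj_iff]
  simp only [reflect_apply, Fin.val_rev, Fin.ext_iff]
  refine and_congr_right fun _ => ?_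
  have := x.1.isLt
  have := y.1.isLt
  omega

def IsHook {u v : Fin k × Bool} (W : (Ladder k).Walk u v) (lo hi r : ℕ) : Prop :=
  (∀ x, x ∈ W.support ↔ lo ≤ (x.1 : ℕ) ∧ (x.1 : ℕ) ≤ hi) ∧
    ∀ e, e ∈ W.edges ↔ e ∈ (hookGraph k lo hi r).edgeSet

theorem isHook_hook (a n : ℕ) (h : a + n < k) : IsHook (hook a n h) a (a + n) (a + n) :=
  ⟨mem_support_hook a n h, mem_edges_hook a n h⟩

theorem isHook_map_reflect_iff {u v : Fin k × Bool} {W : (Ladder k).Walk u v} {lo hi r : ℕ}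
    (hlo : lo < k) (hhi : hi < k) (hr : r < k) :
    IsHook (W.map reflect.toHom) (k - 1 - hi) (k - 1 - lo) (k - 1 - r) ↔ IsHook W lo hi r := by
  have hσ : (⇑(reflect (k := k)).toHom : _ → _) = reflect := rfl
  have hσ₂ : Function.Involutive (Sym2.map (reflect (k := k))) := fun e => by
    rw [Sym2.map_map, reflect_involutive.comp_self, Sym2.map_id, id]
  simp only [IsHook, Walk.support_map, Walk.edges_map, hσ]
  refine and_congr ?_ ?_
  · rw [reflect_involutive.surjective.forall]
    refine forall_congr' fun x => ?_
    rw [List.mem_map_of_injective reflect.injective, reflect_apply, Fin.val_rev]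
    have := x.1.isLt
    refine iff_congr Iff.rfl ?_
    omega
  · rw [hσ₂.surjective.forall]
    refine forall_congr' fun e => ?_
    rw [List.mem_map_of_injective (Sym2.map.injective reflect.injective)]
    induction e using Sym2.ind with | _ x y => ?_
    rw [Sym2.map_mk, mem_edgeSet, mem_edgeSet, hookGraph_adj_reflect hlo hhi hr]

theorem reflect_zero (hk : 0 < k) (b : Bool) :
    reflect (⟨0, hk⟩, b) = (⟨k - 1, Nat.sub_lt hk one_pos⟩, b) := by
  simp [reflect_apply, Fin.ext_iff]

theorem reflect_last (hk : 0 < k) (b : Bool) :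
    reflect (⟨k - 1, Nat.sub_lt hk one_pos⟩, b) = (⟨0, hk⟩, b) := by
  rw [← reflect_zero hk, reflect_involutive]

def lastHook (n : ℕ) (h : n < k) :
    (Ladder k).Walk (⟨k - 1, Nat.sub_lt (by omega) one_pos⟩, false)
      (⟨k - 1, Nat.sub_lt (by omega) one_pos⟩, true) :=
  ((hook 0 n (by omega)).map reflect.toHom).copy (reflect_zero _ _) (reflect_zero _ _)

theorem isPath_lastHook (n : ℕ) (h : n < k) : (lastHook n h).IsPath :=
  (Walk.isPath_copy _ _ _).mpr ((isPath_hook 0 n _).map reflect.injective)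

theorem isHook_copy {u v u' v' : Fin k × Bool} (W : (Ladder k).Walk u v) (hu : u = u')
    (hv : v = v') {lo hi r : ℕ} : IsHook (W.copy hu hv) lo hi r ↔ IsHook W lo hi r := by
  subst hu hv
  rfl

theorem isHook_lastHook (n : ℕ) (h : n < k) :
    IsHook (lastHook n h) (k - 1 - n) (k - 1) (k - 1 - n) := by
  rw [lastHook, isHook_copy]
  simpa using (isHook_map_reflect_iff (by omega) (by omega) (by omega)).mpr
    (isHook_hook 0 n (by omega))

theorem exists_isHook_of_isPath_first (hk : 0 < k)
    {W : (Ladder k).Walk (⟨0, hk⟩, false) (⟨0, hk⟩, true)} (hW : W.IsPath) :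
    ∃ n < k, IsHook W 0 n n := by
  obtain ⟨n, h, rfl⟩ := eq_hook_of_isPath W hW fun x _ => Nat.zero_le _
  exact ⟨n, by omega, by simpa using isHook_hook 0 n h⟩

theorem exists_isHook_of_isPath_last (hk : 0 < k)
    {W : (Ladder k).Walk (⟨k - 1, Nat.sub_lt hk one_pos⟩, false)
      (⟨k - 1, Nat.sub_lt hk one_pos⟩, true)} (hW : W.IsPath) :
    ∃ n < k, IsHook W (k - 1 - n) (k - 1) (k - 1 - n) := by
  have hW' := (Walk.isPath_copy (W.map reflect.toHom) (reflect_last hk false)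
    (reflect_last hk true)).mpr (hW.map reflect.injective)
  obtain ⟨n, hn, hnW⟩ := exists_isHook_of_isPath_first hk hW'
  refine ⟨n, hn, (isHook_map_reflect_iff (by omega) (by omega) (by omega)).mp ?_⟩
  rw [isHook_copy] at hnW
  convert hnW using 2 <;> omega

theorem isTwoPathDecomposition_iff (hk : 0 < k) {H : SimpleGraph (Fin k × Bool)} :
    IsTwoPathDecomposition k hk H ↔ H ≤ Ladder k ∧
      ∃ (p : (Ladder k).Walk (⟨0, hk⟩, false) (⟨0, hk⟩, true))
        (q : (Ladder k).Walk (⟨k - 1, Nat.sub_lt hk one_pos⟩, false)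
          (⟨k - 1, Nat.sub_lt hk one_pos⟩, true)),
        p.IsPath ∧ q.IsPath ∧ (∀ x, x ∈ p.support ↔ x ∉ q.support) ∧
          H.edgeSet = {e | e ∈ p.edges} ∪ {e | e ∈ q.edges} := by
  refine and_congr_right fun hH => ⟨?_, ?_⟩
  · rintro ⟨p, q, hp, hq, hpq, hE⟩
    refine ⟨p.mapLe hH, q.mapLe hH, hp.mapLe hH, hq.mapLe hH, ?_, ?_⟩ <;>
      simpa only [Walk.support_mapLe_eq_support, Walk.edges_mapLe_eq_edges]
  · rintro ⟨p, q, hp, hq, hpq, hE⟩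
    have hpH : ∀ e ∈ p.edges, e ∈ H.edgeSet := fun e he => hE ▸ Or.inl he
    have hqH : ∀ e ∈ q.edges, e ∈ H.edgeSet := fun e he => hE ▸ Or.inr he
    refine ⟨p.transfer H hpH, q.transfer H hqH, hp.transfer hpH, hq.transfer hqH, ?_, ?_⟩ <;>
      simpa only [Walk.support_transfer, Walk.edges_transfer]

theorem hookGraph_le (lo hi r : ℕ) : hookGraph k lo hi r ≤ Ladder k := fun _ _ h => h.1

def splitGraph (k j : ℕ) : SimpleGraph (Fin k × Bool) :=
  hookGraph k 0 j j ⊔ hookGraph k (j + 1) (k - 1) (j + 1)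

theorem isTwoPathDecomposition_splitGraph (hk : 0 < k) {j : ℕ} (hj : j + 1 < k) :
    IsTwoPathDecomposition k hk (splitGraph k j) := by
  have hp := isHook_hook (k := k) 0 j (by omega)
  have hq := isHook_lastHook (k := k) (k - 2 - j) (by omega)
  simp only [zero_add] at hp
  rw [show k - 1 - (k - 2 - j) = j + 1 by omega] at hq
  refine (isTwoPathDecomposition_iff hk).mpr ⟨sup_le (hookGraph_le ..) (hookGraph_le ..),
    hook 0 j (by omega), lastHook (k - 2 - j) (by omega), isPath_hook .., isPath_lastHook ..,
    fun x => ?_, ?_⟩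
  · rw [hp.1, hq.1]
    omega
  · ext e
    simp only [splitGraph, edgeSet_sup, Set.mem_union, Set.mem_ofPred_eq, hp.2, hq.2]

theorem eq_splitGraph_of_isTwoPathDecomposition (hk : 0 < k) {H : SimpleGraph (Fin k × Bool)}
    (hH : IsTwoPathDecomposition k hk H) : ∃ j, j + 1 < k ∧ H = splitGraph k j := by
  obtain ⟨-, p, q, hp, hq, hpq, hE⟩ := (isTwoPathDecomposition_iff hk).mp hH
  obtain ⟨n, hn, hpn⟩ := exists_isHook_of_isPath_first hk hp
  obtain ⟨m, hm, hqm⟩ := exists_isHook_of_isPath_last hk hq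
  have hlast := hpq (⟨n, hn⟩, false)
  simp only [hpn.1, hqm.1] at hlast
  have hnk : n + 1 < k := by omega
  have hnext := hpq (⟨n + 1, hnk⟩, false)
  simp only [hpn.1, hqm.1] at hnext
  have hmn : k - 1 - m = n + 1 := by omega
  refine ⟨n, hnk, edgeSet_injective ?_⟩
  ext e
  rw [hE, splitGraph, edgeSet_sup, ← hmn]
  simp only [Set.mem_union, Set.mem_ofPred_eq, hpn.2, hqm.2]

theorem splitGraph_adj_rung_iff {j : ℕ} (hj : j + 1 < k) (i : Fin k) :
    (splitGraph k j).Adj (i, false) (i, true) ↔ (i : ℕ) = j ∨ (i : ℕ) = j + 1 := by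
  have := i.isLt
  simp only [splitGraph, sup_adj, hookGraph, adj_rung, true_and, forall_const]
  omega

theorem splitGraph_injOn : Set.InjOn (splitGraph k) {j | j + 1 < k} := by
  intro j (hj : j + 1 < k) j' (hj' : j' + 1 < k) h
  have h₁ := (splitGraph_adj_rung_iff hj' ⟨j, by omega⟩).mp
    (h ▸ (splitGraph_adj_rung_iff hj _).mpr (Or.inl rfl))
  have h₂ := (splitGraph_adj_rung_iff hj ⟨j', by omega⟩).mp
    (h ▸ (splitGraph_adj_rung_iff hj' _).mpr (Or.inl rfl))
  simp only at h₁ h₂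
  omega

theorem rungs_splitGraph {j : ℕ} (hj : j + 1 < k) :
    {e ∈ (splitGraph k j).edgeSet |
        ∃ i : Fin k, e = s(((i, false) : Fin k × Bool), (i, true))} =
      {s(((⟨j, by omega⟩, false) : Fin k × Bool), (⟨j, by omega⟩, true)),
        s(((⟨j + 1, hj⟩, false) : Fin k × Bool), (⟨j + 1, hj⟩, true))} := by
  ext e
  simp only [Set.mem_ofPred_eq, Set.mem_insert_iff, Set.mem_singleton_iff]
  constructor
  · rintro ⟨he, i, rfl⟩
    rcases (splitGraph_adj_rung_iff hj i).mp he with hi | hi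
    · left; simp [Fin.ext_iff, hi]
    · right; simp [Fin.ext_iff, hi]
  · rintro (rfl | rfl)
    · exact ⟨(splitGraph_adj_rung_iff hj _).mpr (Or.inl rfl), _, rfl⟩
    · exact ⟨(splitGraph_adj_rung_iff hj _).mpr (Or.inr rfl), _, rfl⟩

end Ladder

/-- In the `k`-rung ladder there are exactly `k - 1` spanning subgraphs consisting of two
vertex-disjoint paths with endpoints `u_1, v_1` and `u_k, v_k` respectively; each of them
uses exactly two consecutive rungs. -/
theorem ladder_two_path_decompositions (k : ℕ) (hk : 2 ≤ k) :
    Nat.card {H : SimpleGraph (Fin k × Bool) //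
        IsTwoPathDecomposition k (by omega) H} = k - 1 ∧
    (∀ H : SimpleGraph (Fin k × Bool), IsTwoPathDecomposition k (by omega) H →
      ∃ j j' : Fin k, (j : ℕ) + 1 = (j' : ℕ) ∧
        {e ∈ H.edgeSet | ∃ i : Fin k, e = s(((i, false) : Fin k × Bool), (i, true))} =
          {s(((j, false) : Fin k × Bool), (j, true)),
           s(((j', false) : Fin k × Bool), (j', true))}) := by
  have hk0 : 0 < k := by omega
  let toDecomp (j : Fin (k - 1)) : {H // IsTwoPathDecomposition k hk0 H} :=
    ⟨Ladder.splitGraph k j, Ladder.isTwoPathDecomposition_splitGraph hk0 (by omega)⟩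
  have hbij : Function.Bijective toDecomp := by
    refine ⟨fun j j' h => Fin.ext <| Ladder.splitGraph_injOn (show (j : ℕ) + 1 < k by omega)
      (show (j' : ℕ) + 1 < k by omega) (congrArg Subtype.val h), ?_⟩
    rintro ⟨H, hH⟩
    obtain ⟨j, hj, rfl⟩ := Ladder.eq_splitGraph_of_isTwoPathDecomposition hk0 hH
    exact ⟨⟨j, by omega⟩, rfl⟩
  refine ⟨?_, fun H hH => ?_⟩
  · rw [← Nat.card_eq_of_bijective toDecomp hbij, Nat.card_eq_fintype_card, Fintype.card_fin]
  · obtain ⟨j, hj, rfl⟩ := Ladder.eq_splitGraph_of_isTwoPathDecomposition hk0 hH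
    exact ⟨⟨j, by omega⟩, ⟨j + 1, hj⟩, rfl, Ladder.rungs_splitGraph hj⟩
end

section
/- In the nanotube N(5,k), every Hamilton cycle uses the same even number of edges (either 2 or 4) from each of the k+1 five-edge cuts separating consecutive layers. -/
/-- The vertex set of the width-5 zigzag nanotube `N(5,k)`: an inner 5-cycle (`inl`),
`k` intermediate 10-cycles (`inr ∘ inl`), and an outer 5-cycle (`inr ∘ inr`). -/
abbrev N5Vertex (k : ℕ) := Fin 5 ⊕ (Fin k × Fin 10) ⊕ Fin 5

/-- The width-5 zigzag nanotube `N(5,k)`: `k + 2` concentric cycles (an inner 5-cycle,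
`k` intermediate 10-cycles, and an outer 5-cycle) joined by 5-vertex matchings so that
the vertices of each 10-cycle alternately attach inward and outward, respecting the
cyclic orders.  Vertex `2i` of the first 10-cycle attaches to vertex `i` of the inner
5-cycle; the `j`-th and `(j+1)`-st 10-cycles are matched at positions of parity `j + 1`;
and the outer 5-cycle attaches to the last 10-cycle at positions of parity `k`. -/
def N5 (k : ℕ) : SimpleGraph (N5Vertex k) :=
  SimpleGraph.fromRel (fun p q =>
    match p, q with
    | .inl i, .inl i' => ((i : ℕ) + 1) % 5 = (i' : ℕ)
    | .inr (.inr i), .inr (.inr i') => ((i : ℕ) + 1) % 5 = (i' : ℕ)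
    | .inr (.inl (j, a)), .inr (.inl (j', a')) =>
        (j = j' ∧ ((a : ℕ) + 1) % 10 = (a' : ℕ)) ∨
        ((j : ℕ) + 1 = (j' : ℕ) ∧ a = a' ∧ (a : ℕ) % 2 = ((j : ℕ) + 1) % 2)
    | .inl i, .inr (.inl (j, a)) => (j : ℕ) = 0 ∧ (a : ℕ) = 2 * (i : ℕ)
    | .inr (.inl (j, a)), .inr (.inr x) =>
        (j : ℕ) = k - 1 ∧ (a : ℕ) % 2 = k % 2 ∧ (a : ℕ) / 2 = (x : ℕ)
    | _, _ => False)

/-- The index of the layer containing a vertex of `N(5,k)`: the inner 5-cycle is layer `0`,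
the 10-cycles are layers `1, …, k`, and the outer 5-cycle is layer `k + 1`. -/
def N5layer (k : ℕ) : N5Vertex k → ℕ
  | .inl _ => 0
  | .inr (.inl p) => (p.1 : ℕ) + 1
  | .inr (.inr _) => k + 1

/-- The 5-edge cut of `N(5,k)` separating layers `≤ t` from layers `> t`
(for `0 ≤ t ≤ k`). -/
def N5cut (k t : ℕ) : Set (Sym2 (N5Vertex k)) :=
  {e | e ∈ (N5 k).edgeSet ∧
    ∃ p q : N5Vertex k, e = s(p, q) ∧ N5layer k p ≤ t ∧ t < N5layer k q}


section generic
open Finset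
open scoped Classical

variable {V : Type*} [Fintype V] [DecidableEq V] (H : SimpleGraph V)

noncomputable def np (v : V) (B : Finset V) : ℕ := (B.filter (H.Adj v)).card

noncomputable def cp (A B : Finset V) : ℕ := ∑ v ∈ A, np H v B

lemma cp_eq_sum (A B : Finset V) :
    cp H A B = ∑ v ∈ A, ∑ w ∈ B, if H.Adj v w then 1 else 0 := by
  unfold cp np
  exact Finset.sum_congr rfl fun v _ => Finset.card_filter _ _

lemma ite_adj_comm (v w : V) :
    (if H.Adj v w then (1:ℕ) else 0) = if H.Adj w v then 1 else 0 := by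
  by_cases h : H.Adj v w
  · rw [if_pos h, if_pos h.symm]
  · rw [if_neg h, if_neg fun hc => h hc.symm]

lemma cp_comm (A B : Finset V) : cp H A B = cp H B A := by
  rw [cp_eq_sum, cp_eq_sum, Finset.sum_comm]
  exact Finset.sum_congr rfl fun w _ => Finset.sum_congr rfl fun v _ => ite_adj_comm H v w

lemma np_univ {v : V} (hv : (H.neighborSet v).ncard = 2) : np H v Finset.univ = 2 := by
  rw [Set.ncard_eq_toFinset_card'] at hv
  unfold np
  rw [← hv]
  congr 1
  ext w
  simp [SimpleGraph.mem_neighborSet]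

lemma np_split {v : V} (hv : (H.neighborSet v).ncard = 2) {B C : Finset V}
    (hBC : Disjoint B C) (hsub : ∀ w, H.Adj v w → w ∈ B ∨ w ∈ C) :
    np H v B + np H v C = 2 := by
  rw [← np_univ H hv]
  unfold np
  rw [← Finset.card_union_of_disjoint (Finset.disjoint_filter_filter hBC),
    ← Finset.filter_union]
  congr 1
  ext w
  simp only [Finset.mem_filter, Finset.mem_union, Finset.mem_univ, true_and]
  exact ⟨fun h => h.2, fun h => ⟨hsub w h, h⟩⟩

lemma even_cp_self (A : Finset V) : Even (cp H A A) := by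
  rw [cp_eq_sum]
  induction A using Finset.induction_on with
  | empty => simp
  | @insert a s ha ih =>
    simp only [Finset.sum_insert ha]
    rw [Finset.sum_add_distrib]
    have hsw : ∑ v ∈ s, (if H.Adj v a then (1:ℕ) else 0)
        = ∑ v ∈ s, (if H.Adj a v then 1 else 0) :=
      Finset.sum_congr rfl fun v _ => ite_adj_comm H v a
    rw [hsw, if_neg (H.irrefl)]
    obtain ⟨m, hm⟩ := ih
    exact ⟨(∑ w ∈ s, if H.Adj a w then 1 else 0) + m, by omega⟩

lemma cp_split_compl (hdeg : ∀ v, (H.neighborSet v).ncard = 2) (A : Finset V) :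
    cp H A A + cp H A Aᶜ = 2 * A.card := by
  unfold cp
  rw [← Finset.sum_add_distrib,
    Finset.sum_congr rfl (fun v _ => np_split H (hdeg v) disjoint_compl_right
      (fun w _ => by by_cases h : w ∈ A
                     · exact Or.inl h
                     · exact Or.inr (Finset.mem_compl.2 h))),
    Finset.sum_const, smul_eq_mul, mul_comm]

lemma even_cp_compl (hdeg : ∀ v, (H.neighborSet v).ncard = 2) (A : Finset V) :
    Even (cp H A Aᶜ) := by
  obtain ⟨m, hm⟩ := even_cp_self H A
  have h2 := cp_split_compl H hdeg A
  exact ⟨A.card - m, by omega⟩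

lemma cut_ncard (A : Finset V) :
    {e ∈ H.edgeSet | ∃ p q : V, e = s(p,q) ∧ p ∈ A ∧ q ∉ A}.ncard = cp H A Aᶜ := by
  have himg : {e ∈ H.edgeSet | ∃ p q : V, e = s(p,q) ∧ p ∈ A ∧ q ∉ A}
      = (fun p : V × V => s(p.1, p.2)) '' {p : V × V | H.Adj p.1 p.2 ∧ p.1 ∈ A ∧ p.2 ∉ A} := by
    ext e
    constructor
    · rintro ⟨he, p, q, rfl, hp, hq⟩
      exact ⟨(p,q), ⟨(SimpleGraph.mem_edgeSet H).1 he, hp, hq⟩, rfl⟩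
    · rintro ⟨⟨p,q⟩, ⟨hadj, hp, hq⟩, rfl⟩
      exact ⟨(SimpleGraph.mem_edgeSet H).2 hadj, p, q, rfl, hp, hq⟩
  rw [himg, Set.ncard_image_of_injOn ?inj]
  case inj =>
    rintro ⟨p,q⟩ ⟨h1,hp,hq⟩ ⟨p',q'⟩ ⟨h1',hp',hq'⟩ heq
    rcases Sym2.eq_iff.1 heq with ⟨rfl, rfl⟩ | ⟨rfl, rfl⟩
    · rfl
    · exact absurd hp hq'
  have hset : {p : V × V | H.Adj p.1 p.2 ∧ p.1 ∈ A ∧ p.2 ∉ A}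
      = ↑((A ×ˢ Aᶜ).filter fun p => H.Adj p.1 p.2) := by
    ext ⟨p,q⟩
    simp only [Set.mem_setOf_eq, Finset.coe_filter, Finset.mem_product, Finset.mem_compl]
    tauto
  rw [hset, Set.ncard_coe_finset, Finset.card_filter, cp_eq_sum, Finset.sum_product]

lemma exists_cross_adj (hc : H.Connected) {A : Finset V} {u w : V}
    (hu : u ∈ A) (hw : w ∉ A) : ∃ x y, x ∈ A ∧ y ∉ A ∧ H.Adj x y := by
  obtain ⟨p⟩ := hc.preconnected u w
  revert hu hw
  induction p with
  | nil => intro h1 h2; exact absurd h1 h2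
  | @cons a b c hadj q ih =>
    intro h1 h2
    by_cases hb : b ∈ A
    · exact ih hb h2
    · exact ⟨a, b, h1, hb, hadj⟩

lemma cp_pos {A B : Finset V} {x y : V} (hx : x ∈ A) (hy : y ∈ B) (h : H.Adj x y) :
    0 < cp H A B := by
  have h1 : 0 < np H x B := Finset.card_pos.2 ⟨y, Finset.mem_filter.2 ⟨hy, h⟩⟩
  exact lt_of_lt_of_le h1 (Finset.single_le_sum (f := fun v => np H v B) (fun _ _ => Nat.zero_le _) hx)

end generic
open Finset
open scoped Classical

noncomputable def AF (k t : ℕ) : Finset (N5Vertex k) :=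
  Finset.univ.filter fun v => N5layer k v ≤ t

def midP (k i c : ℕ) : N5Vertex k → Prop := fun v =>
  match v with
  | .inr (.inl p) => (p.1 : ℕ) = i ∧ (p.2 : ℕ) % 2 = c % 2
  | _ => False

noncomputable def InnF (k i : ℕ) : Finset (N5Vertex k) := Finset.univ.filter (midP k i i)
noncomputable def OutF (k i : ℕ) : Finset (N5Vertex k) := Finset.univ.filter (midP k i (i+1))

variable {k : ℕ}

lemma mem_AF {v : N5Vertex k} {t : ℕ} : v ∈ AF k t ↔ N5layer k v ≤ t := by
  simp [AF]

lemma mem_InnF {j : Fin k} {a : Fin 10} {i : ℕ} :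
    (.inr (.inl (j,a)) : N5Vertex k) ∈ InnF k i ↔ (j:ℕ) = i ∧ (a:ℕ) % 2 = i % 2 := by
  simp [InnF, midP]

lemma mem_OutF {j : Fin k} {a : Fin 10} {i : ℕ} :
    (.inr (.inl (j,a)) : N5Vertex k) ∈ OutF k i ↔ (j:ℕ) = i ∧ (a:ℕ) % 2 = (i+1) % 2 := by
  simp [OutF, midP]

lemma InnF_elim {v : N5Vertex k} {i : ℕ} (h : v ∈ InnF k i) :
    ∃ (j : Fin k) (a : Fin 10), v = .inr (.inl (j,a)) ∧ (j:ℕ) = i ∧ (a:ℕ) % 2 = i % 2 := by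
  rcases v with i5 | ⟨j,a⟩ | x
  · simp [InnF, midP] at h
  · exact ⟨j, a, rfl, mem_InnF.1 h⟩
  · simp [InnF, midP] at h

lemma OutF_elim {v : N5Vertex k} {i : ℕ} (h : v ∈ OutF k i) :
    ∃ (j : Fin k) (a : Fin 10), v = .inr (.inl (j,a)) ∧ (j:ℕ) = i ∧ (a:ℕ) % 2 = (i+1) % 2 := by
  rcases v with i5 | ⟨j,a⟩ | x
  · simp [OutF, midP] at h
  · exact ⟨j, a, rfl, mem_OutF.1 h⟩
  · simp [OutF, midP] at h

lemma InnF_layer {v : N5Vertex k} {i : ℕ} (h : v ∈ InnF k i) : N5layer k v = i + 1 := by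
  obtain ⟨j, a, rfl, hj, _⟩ := InnF_elim h
  simp [N5layer, hj]

lemma OutF_layer {v : N5Vertex k} {i : ℕ} (h : v ∈ OutF k i) : N5layer k v = i + 1 := by
  obtain ⟨j, a, rfl, hj, _⟩ := OutF_elim h
  simp [N5layer, hj]

/-- flip involution exchanging `InnF` and `OutF` -/
def n5flip : N5Vertex k → N5Vertex k := fun v =>
  match v with
  | .inr (.inl (j,a)) => .inr (.inl (j, ⟨((a:ℕ)+5) % 10, by omega⟩))
  | x => x

lemma card_InnF_eq_OutF (i : ℕ) : (InnF k i).card = (OutF k i).card := by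
  refine Finset.card_bij' (fun v _ => n5flip v) (fun v _ => n5flip v) ?_ ?_ ?_ ?_
  · intro v hv
    obtain ⟨j, a, rfl, hj, ha⟩ := InnF_elim hv
    refine mem_OutF.2 ⟨hj, ?_⟩
    simp only [n5flip]
    omega
  · intro v hv
    obtain ⟨j, a, rfl, hj, ha⟩ := OutF_elim hv
    refine mem_InnF.2 ⟨hj, ?_⟩
    simp only [n5flip]
    omega
  · intro v hv
    obtain ⟨j, a, rfl, hj, ha⟩ := InnF_elim hv
    have h10 := a.isLt
    show (Sum.inr (Sum.inl (j, (⟨((((a:ℕ)+5)%10)+5)%10, by omega⟩ : Fin 10))) : N5Vertex k) = _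
    exact congrArg _ (congrArg _ (congrArg (Prod.mk j) (Fin.ext (by simp only [Fin.val_mk]; omega))))
  · intro v hv
    obtain ⟨j, a, rfl, hj, ha⟩ := OutF_elim hv
    have h10 := a.isLt
    show (Sum.inr (Sum.inl (j, (⟨((((a:ℕ)+5)%10)+5)%10, by omega⟩ : Fin 10))) : N5Vertex k) = _
    exact congrArg _ (congrArg _ (congrArg (Prod.mk j) (Fin.ext (by simp only [Fin.val_mk]; omega))))

lemma n5_adj_layer_cases {v w : N5Vertex k} (h : (N5 k).Adj v w) {i : ℕ} (hik : i < k)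
    (hv : N5layer k v ≤ i) (hw : i < N5layer k w) : w ∈ InnF k i := by
  rcases v with i5 | ⟨j,a⟩ | x <;> rcases w with i5' | ⟨j',a'⟩ | x' <;>
    simp only [N5, SimpleGraph.fromRel_adj, N5layer] at h hv hw ⊢
  · omega
  · rw [mem_InnF]
    have hj' := j'.isLt
    rcases h.2 with ⟨h1, h2⟩ | hf
    · omega
    · exact absurd hf not_false
  · rcases h.2 with hf | hf <;> exact hf.elim
  · rcases h.2 with hf | ⟨h1, h2⟩
    · exact absurd hf not_false
    · omega
  · rw [mem_InnF]
    simp only [Fin.ext_iff, Prod.mk.injEq] at h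
    have hj := j.isLt
    have hj' := j'.isLt
    rcases h.2 with (⟨h1,h2⟩ | ⟨h1,h2,h3⟩) | (⟨h1,h2⟩ | ⟨h1,h2,h3⟩) <;> omega
  · have hj := j.isLt
    rcases h.2 with ⟨h1, h2, h3⟩ | hf
    · omega
    · exact absurd hf not_false
  · rcases h.2 with hf | hf <;> exact hf.elim
  · rcases h.2 with hf | ⟨h1, h2, h3⟩
    · exact absurd hf not_false
    · have hj' := j'.isLt
      omega
  · omega

lemma n5_cross_up {v w : N5Vertex k} (h : (N5 k).Adj v w) {i : ℕ} (hik : i < k)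
    (hv : N5layer k v ≤ i + 1) (hw : i + 1 < N5layer k w) : v ∈ OutF k i := by
  rcases v with i5 | ⟨j,a⟩ | x <;> rcases w with i5' | ⟨j',a'⟩ | x' <;>
    simp only [N5, SimpleGraph.fromRel_adj, N5layer, OutF, midP, Finset.mem_filter,
      Finset.mem_univ, true_and, Fin.ext_iff, Prod.mk.injEq, Sum.inr.injEq,
      Sum.inl.injEq, ne_eq, reduceCtorEq, not_false_eq_true, true_and, and_true,
      false_or, or_false, Fin.val_mk] at * <;>
    (try have hb1 := j.isLt) <;> (try have hb2 := j'.isLt) <;>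
    (try have hb3 := a.isLt) <;> (try have hb4 := a'.isLt) <;> omega

lemma n5_inn_nbrs {v w : N5Vertex k} {i : ℕ} (hik : i < k) (hv : v ∈ InnF k i)
    (h : (N5 k).Adj v w) : w ∈ OutF k i ∨ N5layer k w ≤ i := by
  obtain ⟨j, a, rfl, hj, ha⟩ := InnF_elim hv
  rcases w with i5' | ⟨j',a'⟩ | x' <;>
    simp only [N5, SimpleGraph.fromRel_adj, N5layer, OutF, midP, Finset.mem_filter,
      Finset.mem_univ, true_and, Fin.ext_iff, Prod.mk.injEq, Sum.inr.injEq,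
      Sum.inl.injEq, ne_eq, reduceCtorEq, not_false_eq_true, true_and, and_true,
      false_or, or_false, Fin.val_mk] at * <;>
    (try have hb1 := j.isLt) <;> (try have hb2 := j'.isLt) <;>
    (try have hb3 := a.isLt) <;> (try have hb4 := a'.isLt) <;> omega

lemma n5_out_nbrs {v w : N5Vertex k} {i : ℕ} (hik : i < k) (hv : v ∈ OutF k i)
    (h : (N5 k).Adj v w) : w ∈ InnF k i ∨ i + 1 < N5layer k w := by
  obtain ⟨j, a, rfl, hj, ha⟩ := OutF_elim hv
  rcases w with i5' | ⟨j',a'⟩ | x' <;>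
    simp only [N5, SimpleGraph.fromRel_adj, N5layer, InnF, midP, Finset.mem_filter,
      Finset.mem_univ, true_and, Fin.ext_iff, Prod.mk.injEq, Sum.inr.injEq,
      Sum.inl.injEq, ne_eq, reduceCtorEq, not_false_eq_true, true_and, and_true,
      false_or, or_false, Fin.val_mk] at * <;>
    (try have hb1 := j.isLt) <;> (try have hb2 := j'.isLt) <;>
    (try have hb3 := a.isLt) <;> (try have hb4 := a'.isLt) <;> omega

lemma n5_layer_zero {v : N5Vertex k} (hv : N5layer k v = 0) : ∃ i5 : Fin 5, v = .inl i5 := by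
  rcases v with i5 | ⟨j,a⟩ | x
  · exact ⟨i5, rfl⟩
  · simp [N5layer] at hv
  · simp [N5layer] at hv

lemma n5_inl_nbrs (hk : 1 ≤ k) {i5 : Fin 5} {w : N5Vertex k}
    (h : (N5 k).Adj (.inl i5) w) (hw : 0 < N5layer k w) :
    w = Sum.inr (Sum.inl (⟨0, hk⟩, ⟨2 * (i5:ℕ), by have := i5.isLt; omega⟩)) := by
  rcases w with i5' | ⟨j',a'⟩ | x' <;>
    simp only [N5, SimpleGraph.fromRel_adj, N5layer, Fin.ext_iff, Prod.mk.injEq,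
      Sum.inr.injEq, Sum.inl.injEq, ne_eq, reduceCtorEq, not_false_eq_true, true_and,
      and_true, false_or, or_false, Fin.val_mk] at * <;>
    (try have hb1 := j'.isLt) <;> (try have hb2 := a'.isLt) <;> omega

section n5main
open Finset
open scoped Classical

variable {k : ℕ} {H : SimpleGraph (N5Vertex k)}

lemma step_eq (hle : H ≤ N5 k) (hdeg : ∀ v, (H.neighborSet v).ncard = 2) {i : ℕ}
    (hik : i < k) :
    cp H (AF k i) (AF k i)ᶜ = cp H (AF k (i+1)) (AF k (i+1))ᶜ := by
  have hA : cp H (AF k i) (AF k i)ᶜ = cp H (AF k i) (InnF k i) := by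
    unfold cp
    refine Finset.sum_congr rfl fun v hv => ?_
    unfold np
    congr 1
    ext w
    simp only [Finset.mem_filter, Finset.mem_compl, mem_AF]
    constructor
    · rintro ⟨hw, hadj⟩
      exact ⟨n5_adj_layer_cases (hle hadj) hik (mem_AF.1 hv) (by omega), hadj⟩
    · rintro ⟨hw, hadj⟩
      refine ⟨?_, hadj⟩
      have := InnF_layer hw
      omega
  have hIA : cp H (AF k i) (InnF k i) = cp H (InnF k i) (AF k i) := cp_comm H _ _
  have hC : cp H (InnF k i) (AF k i) + cp H (InnF k i) (OutF k i)
      = 2 * (InnF k i).card := by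
    unfold cp
    rw [← Finset.sum_add_distrib]
    have hsplit : ∀ v ∈ InnF k i, np H v (AF k i) + np H v (OutF k i) = 2 := by
      intro v hv
      refine np_split H (hdeg v) ?_ ?_
      · rw [Finset.disjoint_left]
        intro x hx hx'
        have h1 := OutF_layer hx'
        have h2 := mem_AF.1 hx
        omega
      · intro w hadj
        rcases n5_inn_nbrs hik hv (hle hadj) with h | h
        · exact Or.inr h
        · exact Or.inl (mem_AF.2 h)
    rw [Finset.sum_congr rfl hsplit, Finset.sum_const, smul_eq_mul, mul_comm]
  have hOutSub : OutF k i ⊆ AF k (i+1) := fun v hv => mem_AF.2 (le_of_eq (OutF_layer hv))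
  have hD : cp H (AF k (i+1)) (AF k (i+1))ᶜ = cp H (OutF k i) (AF k (i+1))ᶜ := by
    unfold cp
    refine (Finset.sum_subset hOutSub fun v hv hvo => ?_).symm
    unfold np
    rw [Finset.card_eq_zero, Finset.eq_empty_iff_forall_notMem]
    intro w hw
    rw [Finset.mem_filter, Finset.mem_compl] at hw
    obtain ⟨hw1, hadj⟩ := hw
    have hw2 : ¬ N5layer k w ≤ i + 1 := fun hc => hw1 (mem_AF.2 hc)
    exact hvo (n5_cross_up (hle hadj) hik (mem_AF.1 hv) (by omega))
  have hE : cp H (OutF k i) (AF k (i+1))ᶜ + cp H (OutF k i) (InnF k i)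
      = 2 * (OutF k i).card := by
    unfold cp
    rw [← Finset.sum_add_distrib]
    have hsplit : ∀ v ∈ OutF k i, np H v (AF k (i+1))ᶜ + np H v (InnF k i) = 2 := by
      intro v hv
      refine np_split H (hdeg v) ?_ ?_
      · rw [Finset.disjoint_left]
        intro x hx hx'
        rw [Finset.mem_compl] at hx
        exact hx (mem_AF.2 (le_of_eq (InnF_layer hx')))
      · intro w hadj
        rcases n5_out_nbrs hik hv (hle hadj) with h | h
        · exact Or.inr h
        · exact Or.inl (Finset.mem_compl.2 fun hc => by have := mem_AF.1 hc; omega)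
    rw [Finset.sum_congr rfl hsplit, Finset.sum_const, smul_eq_mul, mul_comm]
  have hcomm : cp H (InnF k i) (OutF k i) = cp H (OutF k i) (InnF k i) := cp_comm H _ _
  have hcard := card_InnF_eq_OutF (k := k) i
  omega

lemma AF_zero_card : (AF k 0).card = 5 := by
  have h : AF k 0 = (Finset.univ : Finset (Fin 5)).image Sum.inl := by
    ext v
    rcases v with i5 | ⟨j,a⟩ | x <;> simp [mem_AF, N5layer]
  rw [h, Finset.card_image_of_injective _ Sum.inl_injective]
  simp

end n5main

/-- Every Hamilton cycle of `N(5,k)` uses the same even number of edges, either `2` or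
`4`, from each of the `k+1` five-edge cuts separating consecutive layers. -/
theorem N5_hamiltonian_cut_count (k : ℕ) (hk : 1 ≤ k) (H : SimpleGraph (N5Vertex k))
    (hH : IsHamiltonianCycleSubgraph (N5 k) H) :
    ∃ c ∈ ({2, 4} : Set ℕ), ∀ t ≤ k, (H.edgeSet ∩ N5cut k t).ncard = c := by
  classical
  obtain ⟨hle, hconn, hdeg⟩ := hH
  have hall : ∀ t ≤ k, cp H (AF k t) (AF k t)ᶜ = cp H (AF k 0) (AF k 0)ᶜ := by
    intro t
    induction t with
    | zero => intro _; rfl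
    | succ n ih =>
      intro h
      rw [← step_eq hle hdeg (by omega : n < k)]
      exact ih (by omega)
  have hcut : ∀ t, t ≤ k → (H.edgeSet ∩ N5cut k t)
      = {e ∈ H.edgeSet | ∃ p q : N5Vertex k, e = s(p,q) ∧ p ∈ AF k t ∧ q ∉ AF k t} := by
    intro t ht
    ext e
    simp only [Set.mem_inter_iff, N5cut, Set.mem_setOf_eq, Set.mem_sep_iff]
    constructor
    · rintro ⟨he, _, p, q, rfl, h1, h2⟩
      exact ⟨he, p, q, rfl, mem_AF.2 h1, fun hc => by have := mem_AF.1 hc; omega⟩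
    · rintro ⟨he, p, q, rfl, h1, h2⟩
      have h2' : ¬ N5layer k q ≤ t := fun hc => h2 (mem_AF.2 hc)
      exact ⟨he, SimpleGraph.edgeSet_mono hle he, p, q, rfl, mem_AF.1 h1, by omega⟩
  refine ⟨cp H (AF k 0) (AF k 0)ᶜ, ?_, fun t ht => ?_⟩
  · have heven := even_cp_compl H hdeg (AF k 0)
    have hpos : 0 < cp H (AF k 0) (AF k 0)ᶜ := by
      have hu : (Sum.inl 0 : N5Vertex k) ∈ AF k 0 := mem_AF.2 (by simp [N5layer])
      have hw : (Sum.inr (Sum.inr 0) : N5Vertex k) ∉ AF k 0 := by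
        rw [mem_AF]; simp [N5layer]
      obtain ⟨x, y, hx, hy, hadj⟩ := exists_cross_adj H hconn hu hw
      exact cp_pos H hx (Finset.mem_compl.2 hy) hadj
    have hb : cp H (AF k 0) (AF k 0)ᶜ ≤ 5 := by
      have hone : ∀ v ∈ AF k 0, np H v (AF k 0)ᶜ ≤ 1 := by
        intro v hv
        obtain ⟨i5, rfl⟩ := n5_layer_zero (Nat.le_zero.1 (mem_AF.1 hv))
        have hsub : (AF k 0)ᶜ.filter (H.Adj (Sum.inl i5)) ⊆
            {Sum.inr (Sum.inl (⟨0, hk⟩, ⟨2 * (i5:ℕ), by have := i5.isLt; omega⟩))} := by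
          intro w hw
          rw [Finset.mem_filter, Finset.mem_compl] at hw
          obtain ⟨hw1, hadj⟩ := hw
          have hw2 : ¬ N5layer k w ≤ 0 := fun hc => hw1 (mem_AF.2 hc)
          rw [Finset.mem_singleton]
          exact n5_inl_nbrs hk (hle hadj) (by omega)
        calc np H (Sum.inl i5) (AF k 0)ᶜ ≤ _ := Finset.card_le_card hsub
          _ = 1 := Finset.card_singleton _
      calc cp H (AF k 0) (AF k 0)ᶜ ≤ ∑ v ∈ AF k 0, 1 := Finset.sum_le_sum hone
        _ = 5 := by rw [Finset.sum_const, smul_eq_mul, mul_one, AF_zero_card]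
    obtain ⟨m, hm⟩ := heven
    simp only [Set.mem_insert_iff, Set.mem_singleton_iff]
    omega
  · rw [hcut t ht, cut_ncard, hall t ht]
end

section
/- The 6×6 transfer matrix M with rows (0,2,0,0,0,1), (2,0,1,1,0,0), (1,0,1,2,1,0), (1,0,2,1,1,0), (0,2,0,0,0,2), (0,0,2,2,2,0) has characteristic polynomial divisible by x³ − 4x² − 4x + 8, and its spectral radius is the largest real root B of x³ − 4x² − 4x + 8. -/
/-!
The characteristic polynomial is `(x³ − 4x² − 4x + 8) · x · (x + 1)²`, by cofactor expansion.
The cubic has a root `B ∈ [4, 5]` by the intermediate value theorem. Dividing out `x − B` leaves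
`x² + (B − 4)x + (B² − 4B − 4)`, whose coefficients have absolute value at most `1` and `4`, so
each of its roots `z`, real or complex, satisfies `‖z‖² ≤ ‖z‖ + 4` and hence `‖z‖ < 4 ≤ B`.
The remaining eigenvalues `0` and `−1` are smaller still.
-/

open Matrix Polynomial

/-- The transfer matrix for Type 4 Hamilton cycles in the width-6 nanotubes `N(6,k)`. -/
def transferMatrix6 : Matrix (Fin 6) (Fin 6) ℤ :=
  !![0, 2, 0, 0, 0, 1;
     2, 0, 1, 1, 0, 0;
     1, 0, 1, 2, 1, 0;
     1, 0, 2, 1, 1, 0;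
     0, 2, 0, 0, 0, 2;
     0, 0, 2, 2, 2, 0]

theorem charmatrix_transferMatrix6 : charmatrix transferMatrix6 =
    !![X, -2, 0, 0, 0, -1;
       -2, X, -1, -1, 0, 0;
       -1, 0, X - 1, -2, -1, 0;
       -1, 0, -2, X - 1, -1, 0;
       0, -2, 0, 0, X, -2;
       0, 0, -2, -2, -2, X] := by
  ext i j
  fin_cases i <;> fin_cases j <;> simp [transferMatrix6]

theorem transferMatrix6_charpoly :
    transferMatrix6.charpoly = (X ^ 3 - 4 * X ^ 2 - 4 * X + 8) * (X * (X + 1) ^ 2) := by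
  rw [Matrix.charpoly, charmatrix_transferMatrix6]
  simp [det_succ_row_zero, Fin.sum_univ_succ, Fin.succAbove]
  ring

theorem mem_spectrum_transferMatrix6_iff {K : Type*} [Field K] (z : K) :
    z ∈ spectrum K (transferMatrix6.map (Int.cast : ℤ → K)) ↔
      z ^ 3 - 4 * z ^ 2 - 4 * z + 8 = 0 ∨ z = 0 ∨ z = -1 := by
  rw [mem_spectrum_iff_isRoot_charpoly,
    show transferMatrix6.map (Int.cast : ℤ → K) = transferMatrix6.map (Int.castRingHom K) from rfl,
    charpoly_map, transferMatrix6_charpoly]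
  simp [eq_neg_iff_add_eq_zero]

theorem norm_le_of_cubic_root {𝕜 : Type*} [RCLike 𝕜] {B : ℝ} (hB₄ : 4 ≤ B) (hB₅ : B ≤ 5)
    (hB : B ^ 3 - 4 * B ^ 2 - 4 * B + 8 = 0) {z : 𝕜} (hz : z ^ 3 - 4 * z ^ 2 - 4 * z + 8 = 0) :
    ‖z‖ ≤ B := by
  have hB𝕜 : (B : 𝕜) ^ 3 - 4 * (B : 𝕜) ^ 2 - 4 * (B : 𝕜) + 8 = 0 := by
    exact_mod_cast congrArg (RCLike.ofReal : ℝ → 𝕜) hB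
  have hfactor : (z - B) * (z ^ 2 + ((B - 4 : ℝ) * z + (B ^ 2 - 4 * B - 4 : ℝ))) = 0 := by
    push_cast
    linear_combination hz - hB𝕜
  rcases mul_eq_zero.1 hfactor with hzB | hquad
  · rw [sub_eq_zero.1 hzB, RCLike.norm_ofReal, abs_of_nonneg (by linarith)]
  · have hsq : ‖z‖ ^ 2 ≤ (B - 4) * ‖z‖ + 4 := calc
      ‖z‖ ^ 2 = ‖((B - 4 : ℝ) : 𝕜) * z + ((B ^ 2 - 4 * B - 4 : ℝ) : 𝕜)‖ := by
        rw [← norm_pow, eq_neg_of_add_eq_zero_left hquad, norm_neg]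
      _ ≤ |B - 4| * ‖z‖ + |B ^ 2 - 4 * B - 4| := by
        simpa only [norm_mul, RCLike.norm_ofReal] using
          norm_add_le (((B - 4 : ℝ) : 𝕜) * z) ((B ^ 2 - 4 * B - 4 : ℝ) : 𝕜)
      _ ≤ (B - 4) * ‖z‖ + 4 := by
        rw [abs_of_nonneg (by linarith)]
        gcongr
        exact abs_le.2 ⟨by nlinarith, by nlinarith⟩
    nlinarith [norm_nonneg z]

/-- The characteristic polynomial of the width-6 transfer matrix is divisible by
`x³ − 4x² − 4x + 8`, and its spectral radius is the largest real root `B` of this cubic. -/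
theorem transferMatrix6_charpoly_and_spectralRadius :
    ((X ^ 3 - 4 * X ^ 2 - 4 * X + 8 : ℤ[X]) ∣ transferMatrix6.charpoly) ∧
    ∃ B : ℝ,
      (B ^ 3 - 4 * B ^ 2 - 4 * B + 8 = 0 ∧
        ∀ x : ℝ, x ^ 3 - 4 * x ^ 2 - 4 * x + 8 = 0 → x ≤ B) ∧
      ((B : ℂ) ∈ spectrum ℂ (transferMatrix6.map (Int.cast : ℤ → ℂ)) ∧
        ∀ z ∈ spectrum ℂ (transferMatrix6.map (Int.cast : ℤ → ℂ)), ‖z‖ ≤ B) := by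
  obtain ⟨B, ⟨hB₄, hB₅⟩, hB⟩ : ∃ B ∈ Set.Icc (4 : ℝ) 5, B ^ 3 - 4 * B ^ 2 - 4 * B + 8 = 0 :=
    intermediate_value_Icc (by norm_num) (by fun_prop) ⟨by norm_num, by norm_num⟩
  refine ⟨⟨_, transferMatrix6_charpoly⟩, B, ⟨hB, fun x hx => ?_⟩, ?_, fun z hz => ?_⟩
  · exact (le_abs_self x).trans (norm_le_of_cubic_root hB₄ hB₅ hB hx)
  · exact (mem_spectrum_transferMatrix6_iff _).2 (.inl (by exact_mod_cast hB))
  · rcases (mem_spectrum_transferMatrix6_iff z).1 hz with hcubic | rfl | rfl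
    · exact norm_le_of_cubic_root hB₄ hB₅ hB hcubic
    · simp only [norm_zero]; linarith
    · simp only [norm_neg, norm_one]; linarith
end
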